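/- arXiv:1801.07469 — 3 statements merged into one kernel-verified Lean document; each statement's English description precedes it below -/
import Mathlib

section
/- Let $p \ge 1$ and let $a, b > 0$, $c, d \ge 0$ be real numbers. Then $|a-b|^{p-2}(a-b)\left(\frac{c^p}{a^{p-1}} - \frac{d^p}{b^{p-1}}\right) \le |c-d|^p$. -/
open Real

-- tangent line inequality for t ↦ t^p
lemma picone_tangent (p u v : ℝ) (hp : 1 ≤ p) (hu : 0 < u) (hv : 0 ≤ v) :
    u ^ p + p * u ^ (p - 1) * (v - u) ≤ v ^ p := by
  have hs : (-1 : ℝ) ≤ v / u - 1 := by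
    have : 0 ≤ v / u := div_nonneg hv hu.le
    linarith
  have h := one_add_mul_self_le_rpow_one_add hs hp
  have h1 : 1 + (v / u - 1) = v / u := by ring
  rw [h1] at h
  have h2 : (v / u) ^ p = v ^ p / u ^ p := Real.div_rpow hv hu.le p
  rw [h2] at h
  have hup : 0 < u ^ p := rpow_pos_of_pos hu p
  have hum : u ^ p = u ^ (p - 1) * u := by
    rw [← Real.rpow_add_one hu.ne' (p - 1)]; ring_nf
  have := (mul_le_mul_of_nonneg_left h hup.le)
  rw [mul_div_cancel₀ _ hup.ne'] at this
  calc u ^ p + p * u ^ (p - 1) * (v - u)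
      = u ^ p * (1 + p * (v / u - 1)) := by
        rw [hum]; field_simp
    _ ≤ v ^ p := this

-- normalized key inequality, case x ≥ yβ
lemma picone_key (p β x y : ℝ) (hp : 1 ≤ p) (hβ0 : 0 < β) (hβ1 : β < 1)
    (hx : 0 ≤ x) (hy : 0 ≤ y) (hxy : y * β ≤ x) :
    (1 - β) ^ (p - 1) * (x ^ p - β * y ^ p) ≤ (x - y * β) ^ p := by
  have hp0 : (0:ℝ) < p := lt_of_lt_of_le one_pos hp
  rcases eq_or_lt_of_le hx with hx0 | hx0
  · -- x = 0 hence y = 0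
    have hy0 : y = 0 := by nlinarith
    rw [← hx0, hy0]
    simp [Real.zero_rpow hp0.ne']
  · have h1β : 0 < 1 - β := by linarith
    have hu : 0 < (1 - β) * x := mul_pos h1β hx0
    have hv : 0 ≤ x - y * β := by linarith
    have T1 := picone_tangent p ((1 - β) * x) (x - y * β) hp hu hv
    have T2 := picone_tangent p x y hp hx0 hy
    have e1 : ((1 - β) * x) ^ p = (1 - β) ^ p * x ^ p :=
      Real.mul_rpow h1β.le hx
    have e2 : ((1 - β) * x) ^ (p - 1) = (1 - β) ^ (p - 1) * x ^ (p - 1) :=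
      Real.mul_rpow h1β.le hx
    rw [e1, e2] at T1
    have e3 : (1 - β) ^ p = (1 - β) ^ (p - 1) * (1 - β) := by
      rw [← Real.rpow_add_one h1β.ne' (p - 1)]; ring_nf
    rw [e3] at T1
    -- from T2: x^p - y^p ≤ p * x^(p-1) * (x - y)
    have hpow1 : 0 ≤ (1 - β) ^ (p - 1) := Real.rpow_nonneg h1β.le _
    have hxp1 : 0 ≤ x ^ (p - 1) := Real.rpow_nonneg hx _
    nlinarith [mul_le_mul_of_nonneg_left T2 (mul_nonneg hβ0.le hpow1),
      mul_nonneg (mul_nonneg hβ0.le hpow1) (mul_nonneg hxp1 hv)]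

lemma picone_helper (p a b c d : ℝ) (hp : 1 ≤ p) (hb : 0 < b) (hab : b < a)
    (hc : 0 ≤ c) (hd : 0 ≤ d) :
    (a - b) ^ (p - 1) * (c ^ p / a ^ (p - 1) - d ^ p / b ^ (p - 1)) ≤ |c - d| ^ p := by
  have ha : 0 < a := hb.trans hab
  have hp0 : (0:ℝ) < p := lt_of_lt_of_le one_pos hp
  have hp1 : (0:ℝ) ≤ p - 1 := by linarith
  have hap : 0 < a ^ (p - 1) := rpow_pos_of_pos ha _
  have hbp : 0 < b ^ (p - 1) := rpow_pos_of_pos hb _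
  rcases le_or_gt d c with hdc | hdc
  · -- case c ≥ d : use key with β = b/a, x = c/a, y = d/b
    have hβ0 : 0 < b / a := div_pos hb ha
    have hβ1 : b / a < 1 := (div_lt_one ha).mpr hab
    have hxy : d / b * (b / a) ≤ c / a := by
      have e : d / b * (b / a) = d / a := by field_simp
      rw [e]; gcongr
    have K := picone_key p (b / a) (c / a) (d / b) hp hβ0 hβ1
      (div_nonneg hc ha.le) (div_nonneg hd hb.le) hxy
    have hcd : 0 ≤ c - d := by linarith
    rw [show (1 : ℝ) - b / a = (a - b) / a by field_simp,
        Real.div_rpow (by linarith : (0:ℝ) ≤ a - b) ha.le,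
        Real.div_rpow hc ha.le, Real.div_rpow hd hb.le,
        show c / a - d / b * (b / a) = (c - d) / a by field_simp,
        Real.div_rpow hcd ha.le] at K
    have eA : a ^ p = a ^ (p - 1) * a := by
      rw [← Real.rpow_add_one ha.ne' (p - 1)]; ring_nf
    have eB : b ^ p = b ^ (p - 1) * b := by
      rw [← Real.rpow_add_one hb.ne' (p - 1)]; ring_nf
    rw [eA, eB] at K
    have hAa : 0 < a ^ (p - 1) * a := mul_pos hap ha
    have h5 := mul_le_mul_of_nonneg_left K hAa.le
    rw [mul_div_cancel₀ _ hAa.ne'] at h5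
    rw [abs_of_nonneg hcd]
    calc (a - b) ^ (p - 1) * (c ^ p / a ^ (p - 1) - d ^ p / b ^ (p - 1))
        = a ^ (p - 1) * a *
            ((a - b) ^ (p - 1) / a ^ (p - 1) *
              (c ^ p / (a ^ (p - 1) * a) - b / a * (d ^ p / (b ^ (p - 1) * b)))) := by
          field_simp
      _ ≤ (c - d) ^ p := h5
  · -- case c < d : LHS nonpositive
    have h1 : c ^ p ≤ d ^ p := Real.rpow_le_rpow hc hdc.le hp0.le
    have h2 : b ^ (p - 1) ≤ a ^ (p - 1) := Real.rpow_le_rpow hb.le hab.le hp1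
    have h3 : c ^ p / a ^ (p - 1) ≤ d ^ p / b ^ (p - 1) :=
      div_le_div₀ (Real.rpow_nonneg hd p) h1 hbp h2
    have h4 : 0 ≤ (a - b) ^ (p - 1) := Real.rpow_nonneg (by linarith) _
    have := mul_nonpos_of_nonneg_of_nonpos h4 (by linarith : c ^ p / a ^ (p - 1) - d ^ p / b ^ (p - 1) ≤ 0)
    exact this.trans (Real.rpow_nonneg (abs_nonneg _) p)

theorem discrete_picone (p a b c d : ℝ) (hp : 1 ≤ p) (ha : 0 < a) (hb : 0 < b)
    (hc : 0 ≤ c) (hd : 0 ≤ d) :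
    |a - b| ^ (p - 2) * (a - b) * (c ^ p / a ^ (p - 1) - d ^ p / b ^ (p - 1)) ≤ |c - d| ^ p := by
  rcases lt_trichotomy a b with hab | hab | hab
  · -- a < b : apply helper to (b, a, d, c)
    have K := picone_helper p b a d c hp ha hab hd hc
    have hba : 0 < b - a := by linarith
    have e1 : |a - b| = b - a := by rw [abs_sub_comm, abs_of_pos hba]
    have e2 : (b - a) ^ (p - 2) * (a - b) = -((b - a) ^ (p - 1)) := by
      rw [show a - b = -(b - a) by ring, mul_neg,
        show (b - a) ^ (p - 2) * (b - a) = (b - a) ^ (p - 1) by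
          rw [← Real.rpow_add_one hba.ne' (p - 2)]; ring_nf]
    rw [e1, e2, abs_sub_comm]
    calc -((b - a) ^ (p - 1)) * (c ^ p / a ^ (p - 1) - d ^ p / b ^ (p - 1))
        = (b - a) ^ (p - 1) * (d ^ p / b ^ (p - 1) - c ^ p / a ^ (p - 1)) := by ring
      _ ≤ |d - c| ^ p := K
  · -- a = b
    rw [hab]
    simp only [sub_self, mul_zero, zero_mul]
    exact Real.rpow_nonneg (abs_nonneg _) p
  · -- b < a
    have K := picone_helper p a b c d hp hb hab hc hd
    have hba : 0 < a - b := by linarith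
    rw [abs_of_pos hba,
      show (a - b) ^ (p - 2) * (a - b) = (a - b) ^ (p - 1) by
        rw [← Real.rpow_add_one hba.ne' (p - 2)]; ring_nf]
    exact K
end

section
/- Let $p > 1$ and $\beta \ge 1$. For all real numbers $a, b \ge 0$, one has $|a-b|^{p-2}(a-b)(a^\beta - b^\beta) \ge \beta \left(\frac{p}{p+\beta-1}\right)^p \left| a^{\frac{\beta+p-1}{p}} - b^{\frac{\beta+p-1}{p}} \right|^p$. -/
/-!
For `b ≤ a` put `γ = (β + p - 1) / p ≥ 1`, so that `a ^ γ - b ^ γ = γ ∫_b^a t ^ (γ - 1) dt`.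
Hölder's inequality against the constant `1` on `(b, a]` bounds the `p`-th power of this integral
by `(a - b) ^ (p - 1) ∫_b^a t ^ ((γ - 1) p) dt`, and `(γ - 1) p = β - 1` turns the last integral
into `(a ^ β - b ^ β) / β`. The factor `γ ^ p` cancels against `(p / (p + β - 1)) ^ p`, and the
case `a ≤ b` follows by symmetry.
-/

open Real MeasureTheory Set

lemma rpow_integral_le_measureReal_mul_integral_rpow {α : Type*} [MeasurableSpace α]
    {μ : Measure α} [IsFiniteMeasure μ] {p : ℝ} (hp : 1 < p) {f : α → ℝ}
    (hf0 : 0 ≤ᵐ[μ] f) (hf : MemLp f (ENNReal.ofReal p) μ) :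
    (∫ x, f x ∂μ) ^ p ≤ μ.real univ ^ (p - 1) * ∫ x, f x ^ p ∂μ := by
  have holder := integral_mul_le_Lp_mul_Lq_of_nonneg (Real.HolderConjugate.conjExponent hp) hf0
    (Filter.Eventually.of_forall fun _ => zero_le_one) hf (memLp_const 1)
  simp only [mul_one, one_rpow, integral_const, smul_eq_mul] at holder
  have hp0 : 0 < p := by linarith
  have hI : 0 ≤ ∫ x, f x ^ p ∂μ :=
    integral_nonneg_of_ae (by filter_upwards [hf0] with x hx using rpow_nonneg hx p)
  calc (∫ x, f x ∂μ) ^ p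
      ≤ ((∫ x, f x ^ p ∂μ) ^ (1 / p) * μ.real univ ^ (1 / (p / (p - 1)))) ^ p :=
        rpow_le_rpow (integral_nonneg_of_ae hf0) holder hp0.le
    _ = μ.real univ ^ (p - 1) * ∫ x, f x ^ p ∂μ := by
        rw [mul_rpow (by positivity) (by positivity), ← rpow_mul hI, ← rpow_mul measureReal_nonneg,
          one_div_mul_cancel hp0.ne', rpow_one, mul_comm]
        congr 2
        field_simp

lemma setIntegral_Ioc_rpow {a b r : ℝ} (hab : b ≤ a) (hr : -1 < r) :
    ∫ t in Ioc b a, t ^ r = (a ^ (r + 1) - b ^ (r + 1)) / (r + 1) := by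
  rw [← intervalIntegral.integral_of_le hab, integral_rpow (Or.inl hr)]

lemma rpow_sub_rpow_rpow_le {p β a b : ℝ} (hp : 1 < p) (hβ : 1 ≤ β) (hb : 0 ≤ b) (hab : b ≤ a) :
    (a ^ ((β + p - 1) / p) - b ^ ((β + p - 1) / p)) ^ p ≤
      ((β + p - 1) / p) ^ p * (a - b) ^ (p - 1) * ((a ^ β - b ^ β) / β) := by
  set γ := (β + p - 1) / p with hγ
  have hp0 : 0 < p := by linarith
  have hγ0 : 0 < γ := by rw [hγ]; exact div_pos (by linarith) hp0
  have hγ1 : 0 ≤ γ - 1 := by rw [hγ, sub_nonneg, le_div_iff₀ hp0]; linarith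
  have hγβ : (γ - 1) * p = β - 1 := by rw [hγ]; field_simp; ring
  have : IsFiniteMeasure (volume.restrict (Ioc b a)) := by
    rw [isFiniteMeasure_restrict]; exact measure_Ioc_lt_top.ne
  have hnonneg : ∀ t ∈ Ioc b a, 0 ≤ t := fun t ht => hb.trans ht.1.le
  have hmem : MemLp (fun t : ℝ => t ^ (γ - 1)) (ENNReal.ofReal p) (volume.restrict (Ioc b a)) := by
    refine MemLp.of_bound (continuous_rpow_const hγ1).aestronglyMeasurable (a ^ (γ - 1)) ?_
    refine (ae_restrict_iff' measurableSet_Ioc).2 (Filter.Eventually.of_forall fun t ht => ?_)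
    rw [norm_of_nonneg (rpow_nonneg (hnonneg t ht) _)]
    exact rpow_le_rpow (hnonneg t ht) ht.2 hγ1
  have hf0 : 0 ≤ᵐ[volume.restrict (Ioc b a)] fun t : ℝ => t ^ (γ - 1) :=
    (ae_restrict_iff' measurableSet_Ioc).2
      (Filter.Eventually.of_forall fun t ht => rpow_nonneg (hnonneg t ht) _)
  have key := rpow_integral_le_measureReal_mul_integral_rpow hp hf0 hmem
  have hIp : ∫ t in Ioc b a, (t ^ (γ - 1)) ^ p = ∫ t in Ioc b a, t ^ (β - 1) :=
    setIntegral_congr_fun measurableSet_Ioc fun t ht => by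
      simp only [← rpow_mul (hnonneg t ht), hγβ]
  rw [hIp, setIntegral_Ioc_rpow hab (by linarith), setIntegral_Ioc_rpow hab (by linarith),
    sub_add_cancel, sub_add_cancel, measureReal_restrict_apply_univ, volume_real_Ioc_of_le hab,
    div_rpow (sub_nonneg.2 (rpow_le_rpow hb hab hγ0.le)) hγ0.le, div_le_iff₀ (by positivity)] at key
  linarith

lemma power_inequality_of_le {p β a b : ℝ} (hp : 1 < p) (hβ : 1 ≤ β) (hb : 0 ≤ b) (hab : b ≤ a) :
    β * (p / (p + β - 1)) ^ p * |a ^ ((β + p - 1) / p) - b ^ ((β + p - 1) / p)| ^ p ≤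
      |a - b| ^ (p - 2) * (a - b) * (a ^ β - b ^ β) := by
  have hp0 : 0 < p := by linarith
  have hβ0 : 0 < β := by linarith
  have hpβ : 0 < p + β - 1 := by linarith
  set γ := (β + p - 1) / p with hγ
  have hγ0 : 0 < γ := by rw [hγ]; exact div_pos (by linarith) hp0
  have hγp : (p / (p + β - 1)) ^ p * γ ^ p = 1 := by
    rw [← mul_rpow (by positivity) hγ0.le,
      show p / (p + β - 1) * γ = 1 by rw [hγ]; field_simp; ring, one_rpow]
  have hab' : (a - b) ^ (p - 2) * (a - b) = (a - b) ^ (p - 1) := by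
    rcases hab.eq_or_lt with rfl | hlt
    · simp [zero_rpow (by linarith : p - 1 ≠ 0)]
    · rw [← rpow_add_one (sub_pos.2 hlt).ne']; ring_nf
  rw [abs_of_nonneg (sub_nonneg.2 hab),
    abs_of_nonneg (sub_nonneg.2 (rpow_le_rpow hb hab hγ0.le)), hab']
  calc β * (p / (p + β - 1)) ^ p * (a ^ γ - b ^ γ) ^ p
      ≤ β * (p / (p + β - 1)) ^ p * (γ ^ p * (a - b) ^ (p - 1) * ((a ^ β - b ^ β) / β)) :=
        mul_le_mul_of_nonneg_left (rpow_sub_rpow_rpow_le hp hβ hb hab) (by positivity)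
    _ = (a - b) ^ (p - 1) * (a ^ β - b ^ β) := by
        field_simp
        linear_combination (a - b) ^ (p - 1) * (a ^ β - b ^ β) * hγp

theorem power_inequality (p β a b : ℝ) (hp : 1 < p) (hβ : 1 ≤ β)
    (ha : 0 ≤ a) (hb : 0 ≤ b) :
    |a - b| ^ (p - 2) * (a - b) * (a ^ β - b ^ β) ≥
      β * (p / (p + β - 1)) ^ p *
        |a ^ ((β + p - 1) / p) - b ^ ((β + p - 1) / p)| ^ p := by
  rcases le_total b a with hab | hba
  · exact power_inequality_of_le hp hβ hb hab
  · have h := power_inequality_of_le hp hβ ha hba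
    calc |a - b| ^ (p - 2) * (a - b) * (a ^ β - b ^ β)
        = |b - a| ^ (p - 2) * (b - a) * (b ^ β - a ^ β) := by rw [abs_sub_comm]; ring
      _ ≥ _ := h
      _ = _ := by rw [abs_sub_comm]
end

section
/- Let $p > 1$. There exist constants $C_1, C_2 > 0$ depending only on $p$ such that $|a-b|^{p-2}(a-b)\left(\frac{c^p}{a^{p-1}} - \frac{d^p}{b^{p-1}}\right) + C_1 \left|\frac{a-b}{a+b}\right|^p (c^p + d^p) \le C_2 |c-d|^p$ for all $a, b > 0$ and $c, d \ge 0$. -/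
/-!
Assume `b ≤ a` (the expression is symmetric under `(a, c) ↔ (b, d)`) and put `q = (a - b) / a`,
which dominates `(a - b) / (a + b)`. Bernoulli's inequality `(a / b) ^ (p - 1) ≥ 1 + (p - 1) q`
bounds the Picone term by `q ^ (p - 1) (c ^ p - d ^ p) - (p - 1) (q d) ^ p`, and convexity,
`c ^ p - d ^ p ≤ p c ^ (p - 1) (c - d)`, bounds the first part by `p X ^ (p - 1) δ` with
`X = q c`, `Y = q d`, `δ = |c - d|` and `X ≤ Y + δ`. What remains is homogeneous of degree `p`:
when `δ` is small compared with `Y`, the gain `(p - 1) Y ^ p` absorbs everything, and otherwise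
every term is `O(δ ^ p)`. Both Bernoulli and convexity are instances of Young's inequality
`p x ^ (p - 1) y ≤ (p - 1) x ^ p + y ^ p`.
-/

open Real

lemma rpow_sub_one_mul_self {x p : ℝ} (hx : 0 ≤ x) (hp : p ≠ 0) : x ^ (p - 1) * x = x ^ p := by
  rw [← rpow_add_one' hx (by simpa using hp), sub_add_cancel]

lemma mul_rpow_sub_one_mul_le {p x y : ℝ} (hp : 1 ≤ p) (hx : 0 ≤ x) (hy : 0 ≤ y) :
    p * x ^ (p - 1) * y ≤ (p - 1) * x ^ p + y ^ p := by
  have hp0 : 0 < p := by linarith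
  have h := geom_mean_le_arith_mean2_weighted (w₁ := (p - 1) / p) (w₂ := 1 / p)
    (div_nonneg (by linarith) hp0.le) (by positivity) (rpow_nonneg hx p) (rpow_nonneg hy p)
    (by field_simp; ring)
  rw [← rpow_mul hx, ← rpow_mul hy, mul_div_cancel₀ _ hp0.ne', mul_one_div_cancel hp0.ne',
    rpow_one] at h
  calc p * x ^ (p - 1) * y = p * (x ^ (p - 1) * y) := mul_assoc _ _ _
    _ ≤ p * ((p - 1) / p * x ^ p + 1 / p * y ^ p) := by gcongr
    _ = (p - 1) * x ^ p + y ^ p := by field_simp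

lemma rpow_sub_rpow_le_mul_rpow_sub_one {p x y : ℝ} (hp : 1 ≤ p) (hx : 0 ≤ x) (hy : 0 ≤ y) :
    x ^ p - y ^ p ≤ p * x ^ (p - 1) * (x - y) := by
  have h := mul_rpow_sub_one_mul_le hp hx hy
  rw [mul_sub, mul_assoc p, rpow_sub_one_mul_self hx (by linarith)]
  linarith

lemma one_add_mul_sub_div_le_div_rpow {p a b : ℝ} (hp : 1 ≤ p) (ha : 0 < a) (hb : 0 < b) :
    1 + (p - 1) * ((a - b) / a) ≤ (a / b) ^ (p - 1) := by
  have h := mul_rpow_sub_one_mul_le hp hb.le ha.le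
  rw [← rpow_sub_one_mul_self (p := p) hb.le (by linarith),
    ← rpow_sub_one_mul_self (p := p) ha.le (by linarith)] at h
  rw [div_rpow ha.le hb.le, le_div_iff₀ (rpow_pos_of_pos hb _)]
  refine le_of_mul_le_mul_right ?_ ha
  have e : (1 + (p - 1) * ((a - b) / a)) * b ^ (p - 1) * a =
      p * b ^ (p - 1) * a - (p - 1) * (b ^ (p - 1) * b) := by
    field_simp; ring
  linarith

lemma picone_term_le {p a b c d : ℝ} (hp : 1 < p) (hb : 0 < b) (hba : b ≤ a) (hd : 0 ≤ d) :
    |a - b| ^ (p - 2) * (a - b) * (c ^ p / a ^ (p - 1) - d ^ p / b ^ (p - 1)) ≤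
      ((a - b) / a) ^ (p - 1) * (c ^ p - d ^ p) - (p - 1) * ((a - b) / a) ^ p * d ^ p := by
  have ha : 0 < a := hb.trans_le hba
  have hab : 0 ≤ a - b := sub_nonneg.2 hba
  have hq : 0 ≤ (a - b) / a := div_nonneg hab ha.le
  have h_abs : |a - b| ^ (p - 2) * (a - b) = (a - b) ^ (p - 1) := by
    rw [abs_of_nonneg hab, ← rpow_add_one' hab (by linarith)]
    ring_nf
  have h_a : (a - b) ^ (p - 1) / a ^ (p - 1) = ((a - b) / a) ^ (p - 1) :=
    (div_rpow hab ha.le _).symm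
  have h_b : (a - b) ^ (p - 1) / b ^ (p - 1) = ((a - b) / a) ^ (p - 1) * (a / b) ^ (p - 1) := by
    rw [← mul_rpow hq (div_nonneg ha.le hb.le), ← div_rpow hab hb.le]
    field_simp
  calc |a - b| ^ (p - 2) * (a - b) * (c ^ p / a ^ (p - 1) - d ^ p / b ^ (p - 1))
      = (a - b) ^ (p - 1) / a ^ (p - 1) * c ^ p - (a - b) ^ (p - 1) / b ^ (p - 1) * d ^ p := by
        rw [h_abs]; ring
    _ = ((a - b) / a) ^ (p - 1) * c ^ p -
          ((a - b) / a) ^ (p - 1) * (a / b) ^ (p - 1) * d ^ p := by rw [h_a, h_b]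
    _ ≤ ((a - b) / a) ^ (p - 1) * c ^ p -
          ((a - b) / a) ^ (p - 1) * (1 + (p - 1) * ((a - b) / a)) * d ^ p := by
        gcongr
        exact one_add_mul_sub_div_le_div_rpow hp.le ha hb
    _ = ((a - b) / a) ^ (p - 1) * (c ^ p - d ^ p) - (p - 1) * ((a - b) / a) ^ p * d ^ p := by
        rw [← rpow_sub_one_mul_self hq (by linarith : p ≠ 0)]; ring

lemma exists_rpow_absorption {p : ℝ} (hp : 1 < p) :
    ∃ C₁ > 0, ∃ C₂ > 0, ∀ x y δ : ℝ, 0 ≤ x → 0 ≤ y → 0 ≤ δ → x ≤ y + δ →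
      p * x ^ (p - 1) * δ + C₁ * (x ^ p + y ^ p) ≤ (p - 1) * y ^ p + C₂ * δ ^ p := by
  have hp0 : p ≠ 0 := by positivity
  have h2p : 1 ≤ (2 : ℝ) ^ p := one_le_rpow (by norm_num) (by linarith)
  set κ := (p - 1) / (p * 2 ^ p) with hκ
  set C₁ := (p - 1) / (2 * (2 ^ p + 1)) with hC₁
  set K := κ⁻¹ + 1 with hK
  have hκ0 : 0 < κ := div_pos (by linarith) (by positivity)
  have hκ1 : κ ≤ 1 := (div_le_one (by positivity)).2 (by nlinarith)
  have hC₁0 : 0 < C₁ := div_pos (by linarith) (by positivity)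
  have hK1 : 1 ≤ K := by rw [hK]; linarith [inv_pos.2 hκ0]
  refine ⟨C₁, hC₁0, (p + 2 * C₁) * K ^ p, by positivity, fun x y δ hx hy hδ hxy => ?_⟩
  rcases le_or_gt δ (κ * y) with hsmall | hlarge
  · have hx2 : x ≤ 2 * y := by nlinarith
    have h_main : p * x ^ (p - 1) * δ ≤ (p - 1) / 2 * y ^ p :=
      calc p * x ^ (p - 1) * δ ≤ p * (2 * y) ^ (p - 1) * (κ * y) := by gcongr
        _ = p * κ / 2 * ((2 * y) ^ (p - 1) * (2 * y)) := by ring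
        _ = (p - 1) / 2 * y ^ p := by
          rw [rpow_sub_one_mul_self (by positivity) hp0, mul_rpow zero_le_two hy, hκ]
          field_simp
    have h_rem : C₁ * (x ^ p + y ^ p) ≤ (p - 1) / 2 * y ^ p :=
      calc C₁ * (x ^ p + y ^ p) ≤ C₁ * ((2 * y) ^ p + y ^ p) := by gcongr
        _ = (p - 1) / 2 * y ^ p := by
          rw [mul_rpow zero_le_two hy, hC₁]
          field_simp
    have : 0 ≤ (p + 2 * C₁) * K ^ p * δ ^ p := by positivity
    linarith
  · have hy_le : y ≤ κ⁻¹ * δ := by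
      rw [inv_mul_eq_div, le_div_iff₀ hκ0]
      linarith
    have hxK : x ≤ K * δ := by rw [hK]; linarith
    have hyK : y ≤ K * δ := by rw [hK]; linarith
    have h_main : p * x ^ (p - 1) * δ ≤ p * (K * δ) ^ p :=
      calc p * x ^ (p - 1) * δ ≤ p * (K * δ) ^ (p - 1) * (K * δ) := by
            gcongr
            nlinarith
        _ = p * (K * δ) ^ p := by rw [mul_assoc, rpow_sub_one_mul_self (by positivity) hp0]
    have h_rem : C₁ * (x ^ p + y ^ p) ≤ C₁ * ((K * δ) ^ p + (K * δ) ^ p) := by gcongr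
    have : 0 ≤ (p - 1) * y ^ p := mul_nonneg (by linarith) (rpow_nonneg hy p)
    rw [mul_rpow (by positivity) hδ] at h_main h_rem
    linarith

lemma exists_picone_remainder_bound {p : ℝ} (hp : 1 < p) :
    ∃ C₁ > 0, ∃ C₂ > 0, ∀ q c d : ℝ, 0 ≤ q → q ≤ 1 → 0 ≤ c → 0 ≤ d →
      q ^ (p - 1) * (c ^ p - d ^ p) + C₁ * q ^ p * (c ^ p + d ^ p) ≤
        (p - 1) * q ^ p * d ^ p + C₂ * |c - d| ^ p := by
  obtain ⟨C₁, hC₁, C₂, hC₂, habsorb⟩ := exists_rpow_absorption hp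
  refine ⟨C₁, hC₁, C₂, hC₂, fun q c d hq0 hq1 hc hd => ?_⟩
  have hxy : q * c ≤ q * d + |c - d| := by
    nlinarith [le_abs_self (c - d), abs_nonneg (c - d)]
  have h := habsorb (q * c) (q * d) |c - d| (by positivity) (by positivity) (abs_nonneg _) hxy
  have h_mv : q ^ (p - 1) * (c ^ p - d ^ p) ≤ p * (q * c) ^ (p - 1) * |c - d| :=
    calc q ^ (p - 1) * (c ^ p - d ^ p) ≤ q ^ (p - 1) * (p * c ^ (p - 1) * |c - d|) := by
          gcongr
          exact (rpow_sub_rpow_le_mul_rpow_sub_one hp.le hc hd).trans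
            (by gcongr; exact le_abs_self _)
      _ = p * (q * c) ^ (p - 1) * |c - d| := by rw [mul_rpow hq0 hc]; ring
  rw [mul_rpow (z := p) hq0 hc, mul_rpow (z := p) hq0 hd] at h
  linarith

theorem picone_with_remainder (p : ℝ) (hp : 1 < p) :
    ∃ C₁ > 0, ∃ C₂ > 0, ∀ a b c d : ℝ, 0 < a → 0 < b → 0 ≤ c → 0 ≤ d →
      |a - b| ^ (p - 2) * (a - b) * (c ^ p / a ^ (p - 1) - d ^ p / b ^ (p - 1)) +
          C₁ * |(a - b) / (a + b)| ^ p * (c ^ p + d ^ p) ≤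
        C₂ * |c - d| ^ p := by
  obtain ⟨C₁, hC₁, C₂, hC₂, hbound⟩ := exists_picone_remainder_bound hp
  refine ⟨C₁, hC₁, C₂, hC₂, fun a b c d ha hb hc hd => ?_⟩
  wlog hba : b ≤ a generalizing a b c d
  · have h := this b a d c hb ha hd hc (le_of_not_ge hba)
    rw [abs_sub_comm b a, abs_sub_comm d c, add_comm b a, ← neg_sub a b, neg_div, abs_neg] at h
    linarith
  have hq1 : (a - b) / a ≤ 1 := (div_le_one ha).2 (by linarith)
  have h_ratio : |(a - b) / (a + b)| ^ p ≤ ((a - b) / a) ^ p := by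
    rw [abs_of_nonneg (by positivity)]
    gcongr
    linarith
  have h_rem : C₁ * |(a - b) / (a + b)| ^ p * (c ^ p + d ^ p) ≤
      C₁ * ((a - b) / a) ^ p * (c ^ p + d ^ p) := by gcongr
  linarith [picone_term_le (c := c) hp hb hba hd, hbound _ c d (by positivity) hq1 hc hd]
end
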